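/- For real β > 1 and γ > 0, ∑_{k=1}^∞ (σ_{-γ}(k)·σ_{-γ}(k·rad(k))·σ_{-γ}(k·rad(k)²) / (σ_{-γ}(rad(k))·σ_{-γ}(rad(k)²))) · k^{-β} = ζ(β)·ζ(β+γ)·ζ(β+2γ)·ζ(β+3γ). -/

import Mathlib

noncomputable def sigmaNeg (γ : ℝ) (k : ℕ) : ℝ := ∑ d ∈ k.divisors, (d : ℝ) ^ (-γ)

def rad (k : ℕ) : ℕ := ∏ p ∈ k.primeFactors, p

/-
The summand is multiplicative in `k`. At a prime power `p ^ a`, writing `x = p ^ (-γ)` and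
`[m] = 1 + x + ⋯ + x ^ (m - 1)`, it equals `[a + 1] [a + 2] [a + 3] / ([2] [3])`, which is the
coefficient of `t ^ a` in `1 / ((1 - t) (1 - x t) (1 - x² t) (1 - x³ t))`. So the summand is the
Dirichlet convolution of `n ↦ n ^ (-c)` for `c = 0, γ, 2γ, 3γ`, and its L-series at `β` is the
product of the four zeta values.
-/

open Finset ArithmeticFunction UniqueFactorizationMonoid
open scoped ArithmeticFunction.zeta LSeries.notation

lemma rad_eq_radical : rad = radical := funext fun _ => Nat.radical_eq_prod_primeFactors.symm

lemma rad_mul {m n : ℕ} (h : m.Coprime n) : rad (m * n) = rad m * rad n := by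
  simp only [rad_eq_radical]
  exact radical_mul (Nat.coprime_iff_isRelPrime.mp h)

lemma rad_dvd_self (n : ℕ) : rad n ∣ n := rad_eq_radical ▸ radical_dvd_self

lemma rad_prime_pow {p i : ℕ} (hp : p.Prime) (hi : i ≠ 0) : rad (p ^ i) = p := by
  rw [rad_eq_radical, radical_pow_of_prime hp.prime hi, normalize_eq]

lemma ArithmeticFunction.mul_apply_prime_pow {R : Type*} [Semiring R] (f g : ArithmeticFunction R)
    {p : ℕ} (hp : p.Prime) (i : ℕ) :
    (f * g) (p ^ i) = ∑ k ∈ range (i + 1), f (p ^ k) * g (p ^ (i - k)) := by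
  rw [mul_apply, Nat.sum_divisorsAntidiagonal (fun a b => f a * g b), Nat.sum_divisors_prime_pow hp]
  refine sum_congr rfl fun k hk => ?_
  rw [Nat.pow_div (Nat.lt_succ_iff.mp (mem_range.mp hk)) hp.pos]

noncomputable def rpowNeg (c : ℝ) : ArithmeticFunction ℝ :=
  ⟨fun n => if n = 0 then 0 else (n : ℝ) ^ (-c), if_pos rfl⟩

lemma rpowNeg_apply {c : ℝ} {n : ℕ} (hn : n ≠ 0) : rpowNeg c n = (n : ℝ) ^ (-c) := if_neg hn

lemma isMultiplicative_rpowNeg (c : ℝ) : (rpowNeg c).IsMultiplicative := by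
  refine IsMultiplicative.iff_ne_zero.mpr ⟨by simp [rpowNeg_apply], fun {m n} hm hn _ => ?_⟩
  rw [rpowNeg_apply (mul_ne_zero hm hn), rpowNeg_apply hm, rpowNeg_apply hn, Nat.cast_mul,
    Real.mul_rpow (Nat.cast_nonneg m) (Nat.cast_nonneg n)]

lemma rpowNeg_zero : rpowNeg 0 = ζ := by
  ext n
  rcases eq_or_ne n 0 with rfl | hn
  · simp
  · simp [rpowNeg_apply hn, hn]

lemma rpowNeg_prime_pow {c : ℝ} {p : ℕ} (hp : p.Prime) (i : ℕ) :
    rpowNeg c (p ^ i) = ((p : ℝ) ^ (-c)) ^ i := by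
  rw [rpowNeg_apply (pow_ne_zero i hp.ne_zero), Nat.cast_pow,
    ← Real.rpow_pow_comm (Nat.cast_nonneg p)]

lemma zeta_mul_rpowNeg_apply (γ : ℝ) (n : ℕ) :
    ((ζ : ArithmeticFunction ℝ) * rpowNeg γ) n = sigmaNeg γ n := by
  rw [coe_zeta_mul_apply, sigmaNeg]
  exact sum_congr rfl fun d hd => rpowNeg_apply (Nat.ne_of_gt (Nat.pos_of_mem_divisors hd))

lemma isMultiplicative_zeta_mul_rpowNeg (γ : ℝ) :
    ((ζ : ArithmeticFunction ℝ) * rpowNeg γ).IsMultiplicative :=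
  isMultiplicative_zeta.natCast.mul (isMultiplicative_rpowNeg γ)

lemma sigmaNeg_one (γ : ℝ) : sigmaNeg γ 1 = 1 := by simp [sigmaNeg]

lemma sigmaNeg_mul {γ : ℝ} {m n : ℕ} (h : m.Coprime n) :
    sigmaNeg γ (m * n) = sigmaNeg γ m * sigmaNeg γ n := by
  simp only [← zeta_mul_rpowNeg_apply]
  exact (isMultiplicative_zeta_mul_rpowNeg γ).map_mul_of_coprime h

lemma sigmaNeg_prime_pow (γ : ℝ) {p : ℕ} (hp : p.Prime) (i : ℕ) :
    sigmaNeg γ (p ^ i) = ∑ j ∈ range (i + 1), ((p : ℝ) ^ (-γ)) ^ j := by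
  rw [← zeta_mul_rpowNeg_apply, coe_zeta_mul_apply, Nat.sum_divisors_prime_pow hp]
  exact sum_congr rfl fun j _ => rpowNeg_prime_pow hp j

lemma rpowNeg_mul_rpowNeg_add (a b : ℝ) :
    rpowNeg a * rpowNeg (a + b) = (rpowNeg a).pmul (ζ * rpowNeg b) := by
  ext n
  rcases eq_or_ne n 0 with rfl | hn
  · simp
  rw [mul_apply, Nat.sum_divisorsAntidiagonal' (fun d e => rpowNeg a d * rpowNeg (a + b) e),
    pmul_apply, coe_zeta_mul_apply, mul_sum]
  refine sum_congr rfl fun d hd => ?_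
  obtain ⟨e, rfl⟩ := Nat.dvd_of_mem_divisors hd
  have hd0 : d ≠ 0 := Nat.ne_of_gt (Nat.pos_of_mem_divisors hd)
  have he0 : e ≠ 0 := right_ne_zero_of_mul hn
  have hd : (0 : ℝ) < d := by positivity
  rw [Nat.mul_div_cancel_left e (Nat.pos_of_ne_zero hd0), rpowNeg_apply hn, rpowNeg_apply hd0,
    rpowNeg_apply he0, rpowNeg_apply hd0, Nat.cast_mul, Real.mul_rpow hd.le (Nat.cast_nonneg e),
    neg_add, Real.rpow_add hd]
  ring

noncomputable def sigmaNegRad (γ : ℝ) (j k : ℕ) : ArithmeticFunction ℝ :=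
  ⟨fun n => if n = 0 then 0 else sigmaNeg γ (n ^ j * rad n ^ k), if_pos rfl⟩

lemma sigmaNegRad_apply (γ : ℝ) (j k : ℕ) {n : ℕ} (hn : n ≠ 0) :
    sigmaNegRad γ j k n = sigmaNeg γ (n ^ j * rad n ^ k) := if_neg hn

lemma pow_mul_rad_pow_dvd (n j k : ℕ) : n ^ j * rad n ^ k ∣ n ^ (j + k) :=
  pow_add n j k ▸ mul_dvd_mul_left _ (pow_dvd_pow_of_dvd (rad_dvd_self n) k)

lemma isMultiplicative_sigmaNegRad (γ : ℝ) (j k : ℕ) :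
    (sigmaNegRad γ j k).IsMultiplicative := by
  refine IsMultiplicative.iff_ne_zero.mpr ⟨?_, fun {m n} hm hn hmn => ?_⟩
  · simp [sigmaNegRad_apply, rad, sigmaNeg_one]
  have hcop : (m ^ j * rad m ^ k).Coprime (n ^ j * rad n ^ k) :=
    ((hmn.pow _ _).coprime_dvd_left (pow_mul_rad_pow_dvd m j k)).coprime_dvd_right
      (pow_mul_rad_pow_dvd n j k)
  rw [sigmaNegRad_apply γ j k (mul_ne_zero hm hn), sigmaNegRad_apply γ j k hm,
    sigmaNegRad_apply γ j k hn, rad_mul hmn, ← sigmaNeg_mul hcop]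
  ring_nf

lemma sigmaNegRad_apply_prime_pow (γ : ℝ) (j k : ℕ) {p i : ℕ} (hp : p.Prime) (hi : i ≠ 0) :
    sigmaNegRad γ j k (p ^ i) = ∑ l ∈ range (i * j + k + 1), ((p : ℝ) ^ (-γ)) ^ l := by
  rw [sigmaNegRad_apply γ j k (pow_ne_zero i hp.ne_zero), rad_prime_pow hp hi, ← pow_mul,
    ← pow_add, sigmaNeg_prime_pow γ hp]

noncomputable def sigmaNegRadQuotient (γ : ℝ) : ArithmeticFunction ℝ :=
  (((sigmaNegRad γ 1 0).pmul (sigmaNegRad γ 1 1)).pmul (sigmaNegRad γ 1 2)).pdiv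
    ((sigmaNegRad γ 0 1).pmul (sigmaNegRad γ 0 2))

lemma sigmaNegRadQuotient_apply (γ : ℝ) {n : ℕ} (hn : n ≠ 0) :
    sigmaNegRadQuotient γ n =
      sigmaNeg γ n * sigmaNeg γ (n * rad n) * sigmaNeg γ (n * rad n ^ 2) /
        (sigmaNeg γ (rad n) * sigmaNeg γ (rad n ^ 2)) := by
  simp [sigmaNegRadQuotient, sigmaNegRad_apply γ _ _ hn]

lemma isMultiplicative_sigmaNegRadQuotient (γ : ℝ) : (sigmaNegRadQuotient γ).IsMultiplicative :=
  (((isMultiplicative_sigmaNegRad γ 1 0).pmul (isMultiplicative_sigmaNegRad γ 1 1)).pmul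
    (isMultiplicative_sigmaNegRad γ 1 2)).pdiv
    ((isMultiplicative_sigmaNegRad γ 0 1).pmul (isMultiplicative_sigmaNegRad γ 0 2))

lemma sum_geom_sum_mul_pow_mul_geom_sum {K : Type*} [Field K] {x : K} (h1 : x ≠ 1)
    (h2 : x ^ 2 ≠ 1) (h3 : x ^ 3 ≠ 1) (a : ℕ) :
    (∑ k ∈ range (a + 1), (∑ j ∈ range (k + 1), x ^ j) *
        (x ^ (2 * (a - k)) * ∑ j ∈ range (a - k + 1), x ^ j)) *
        ((∑ j ∈ range 2, x ^ j) * ∑ j ∈ range 3, x ^ j) =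
      (∑ j ∈ range (a + 1), x ^ j) * (∑ j ∈ range (a + 2), x ^ j) *
        (∑ j ∈ range (a + 3), x ^ j) := by
  have hx1 : x - 1 ≠ 0 := sub_ne_zero.mpr h1
  have hx2 : x ^ 2 - 1 ≠ 0 := sub_ne_zero.mpr h2
  have hx3 : x ^ 3 - 1 ≠ 0 := sub_ne_zero.mpr h3
  have expand : (x - 1) ^ 2 * ∑ k ∈ range (a + 1), (∑ j ∈ range (k + 1), x ^ j) *
        (x ^ (2 * (a - k)) * ∑ j ∈ range (a - k + 1), x ^ j) =
      ∑ c ∈ range (a + 1), (x ^ (a + 2) * (x ^ 2) ^ c - x ^ (a + 1) * x ^ c - x * (x ^ 3) ^ c +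
        (x ^ 2) ^ c) := by
    rw [mul_sum, ← sum_range_reflect]
    refine sum_congr rfl fun c hc => ?_
    obtain ⟨b, rfl⟩ := Nat.exists_eq_add_of_le (Nat.lt_succ_iff.mp (mem_range.mp hc))
    rw [show c + b + 1 - 1 - c = b by omega, show c + b - b = c by omega, geom_sum_eq h1,
      geom_sum_eq h1]
    field_simp
    ring
  rw [← mul_right_inj' (pow_ne_zero 2 hx1), ← mul_assoc, expand, sum_add_distrib,
    sum_sub_distrib, sum_sub_distrib, ← mul_sum, ← mul_sum, ← mul_sum]
  simp only [geom_sum_eq h1, geom_sum_eq h2, geom_sum_eq h3]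
  rw [← pow_mul, ← pow_mul, mul_comm 2, mul_comm 3, pow_mul, pow_mul,
    show x ^ (a + 2) = x ^ (a + 1) * x by ring, show x ^ (a + 3) = x ^ (a + 1) * x ^ 2 by ring]
  generalize x ^ (a + 1) = y
  field_simp
  ring

lemma sigmaNegRadQuotient_apply_prime_pow (γ : ℝ) {p i : ℕ} (hp : p.Prime) (hi : i ≠ 0)
    {x : ℝ} (hx : (p : ℝ) ^ (-γ) = x) :
    sigmaNegRadQuotient γ (p ^ i) =
      (∑ j ∈ range (i + 1), x ^ j) * (∑ j ∈ range (i + 2), x ^ j) *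
        (∑ j ∈ range (i + 3), x ^ j) /
        ((∑ j ∈ range 2, x ^ j) * ∑ j ∈ range 3, x ^ j) := by
  simp only [sigmaNegRadQuotient, pdiv_apply, pmul_apply, sigmaNegRad_apply_prime_pow γ _ _ hp hi,
    hx, mul_one, mul_zero, add_zero, zero_add, add_assoc, Nat.reduceAdd]

lemma zeta_mul_rpowNeg_mul_rpowNeg_mul_rpowNeg_apply_prime_pow (γ : ℝ) {p : ℕ} (hp : p.Prime)
    (i : ℕ) {x : ℝ} (hx : (p : ℝ) ^ (-γ) = x) :
    ((ζ : ArithmeticFunction ℝ) * rpowNeg γ * (rpowNeg (2 * γ) * rpowNeg (3 * γ))) (p ^ i) =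
      ∑ k ∈ range (i + 1), (∑ j ∈ range (k + 1), x ^ j) *
        (x ^ (2 * (i - k)) * ∑ j ∈ range (i - k + 1), x ^ j) := by
  have hsq : (p : ℝ) ^ (-(2 * γ)) = x ^ 2 := by
    rw [← hx, ← Real.rpow_mul_natCast (Nat.cast_nonneg p)]
    ring_nf
  rw [show 3 * γ = 2 * γ + γ by ring, rpowNeg_mul_rpowNeg_add, mul_apply_prime_pow _ _ hp]
  simp only [pmul_apply, zeta_mul_rpowNeg_apply, sigmaNeg_prime_pow γ hp, rpowNeg_prime_pow hp,
    hsq, hx, ← pow_mul]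

lemma sigmaNegRadQuotient_eq {γ : ℝ} (hγ : γ ≠ 0) :
    sigmaNegRadQuotient γ = ζ * rpowNeg γ * (rpowNeg (2 * γ) * rpowNeg (3 * γ)) := by
  have hmul : (ζ * rpowNeg γ * (rpowNeg (2 * γ) * rpowNeg (3 * γ))).IsMultiplicative :=
    (isMultiplicative_zeta_mul_rpowNeg γ).mul
      ((isMultiplicative_rpowNeg _).mul (isMultiplicative_rpowNeg _))
  refine (IsMultiplicative.eq_iff_eq_on_prime_powers _ (isMultiplicative_sigmaNegRadQuotient γ) _
    hmul).mpr fun p i hp => ?_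
  rcases eq_or_ne i 0 with rfl | hi
  · simp [(isMultiplicative_sigmaNegRadQuotient γ).map_one, hmul.map_one]
  rw [sigmaNegRadQuotient_apply_prime_pow γ hp hi rfl,
    zeta_mul_rpowNeg_mul_rpowNeg_mul_rpowNeg_apply_prime_pow γ hp i rfl]
  set x := (p : ℝ) ^ (-γ)
  have hp1 : (1 : ℝ) < p := by exact_mod_cast hp.one_lt
  have hx0 : 0 < x := Real.rpow_pos_of_pos (zero_lt_one.trans hp1) _
  have hx1 : x ≠ 1 := by
    rcases hγ.lt_or_gt with hneg | hpos
    · exact (Real.one_lt_rpow hp1 (neg_pos.mpr hneg)).ne'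
    · exact (Real.rpow_lt_one_of_one_lt_of_neg hp1 (neg_neg_iff_pos.mpr hpos)).ne
  have hpow {n : ℕ} (hn : n ≠ 0) : x ^ n ≠ 1 := by
    rwa [Ne, pow_eq_one_iff_of_nonneg hx0.le hn]
  have hS (n : ℕ) : 0 < ∑ j ∈ range (n + 1), x ^ j :=
    sum_pos (fun j _ => pow_pos hx0 j) nonempty_range_add_one
  rw [div_eq_iff (mul_pos (hS 1) (hS 2)).ne',
    sum_geom_sum_mul_pow_mul_geom_sum hx1 (hpow two_ne_zero) (hpow three_ne_zero)]

lemma LSeriesHasSum_rpowNeg {s : ℂ} {c : ℝ} (h : 1 < s.re + c) :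
    LSeriesHasSum (fun n => (rpowNeg c n : ℂ)) s (riemannZeta (s + c)) := by
  have hterm : LSeries.term (fun n => (rpowNeg c n : ℂ)) s = LSeries.term 1 (s + c) := by
    ext n
    rcases eq_or_ne n 0 with rfl | hn
    · simp
    have hn' : (n : ℂ) ≠ 0 := Nat.cast_ne_zero.mpr hn
    rw [LSeries.term_of_ne_zero hn, LSeries.term_of_ne_zero hn, rpowNeg_apply hn,
      Complex.ofReal_cpow (Nat.cast_nonneg n), Complex.cpow_add _ _ hn']
    simp [Complex.cpow_neg, div_eq_mul_inv]
  rw [LSeriesHasSum, hterm]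
  exact LSeriesHasSum_one (by simpa using h)

lemma LSeriesHasSum.ofReal_mul {f g : ArithmeticFunction ℝ} {s a b : ℂ}
    (hf : LSeriesHasSum (fun n => (f n : ℂ)) s a)
    (hg : LSeriesHasSum (fun n => (g n : ℂ)) s b) :
    LSeriesHasSum (fun n => ((f * g) n : ℂ)) s (a * b) := by
  convert hf.convolution hg using 1
  ext n
  simp [LSeries.convolution_def, mul_apply]

lemma LSeriesHasSum.hasSum_pnat {f : ℕ → ℂ} {s a : ℂ} (h : LSeriesHasSum f s a) :
    HasSum (fun k : ℕ+ => f k * (k : ℂ) ^ (-s)) a := by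
  have hzero : ∀ n ∉ Set.range ((↑) : ℕ+ → ℕ), LSeries.term f s n = 0 := fun n hn => by
    obtain rfl : n = 0 := by_contra fun h => hn ⟨⟨n, Nat.pos_of_ne_zero h⟩, rfl⟩
    exact LSeries.term_zero f s
  convert (Function.Injective.hasSum_iff PNat.coe_injective hzero).mpr h using 1
  ext k
  simp [Complex.cpow_neg, div_eq_mul_inv]

lemma LSeriesHasSum_sigmaNegRadQuotient {s : ℂ} {γ : ℝ} (hs : 1 < s.re) (hγ : 0 < γ) :
    LSeriesHasSum (fun n => (sigmaNegRadQuotient γ n : ℂ)) s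
      (riemannZeta s * riemannZeta (s + γ) * riemannZeta (s + 2 * γ) *
        riemannZeta (s + 3 * γ)) := by
  have hζ (c : ℝ) (hc : 0 ≤ c) := LSeriesHasSum_rpowNeg (s := s) (c := c) (by linarith)
  rw [sigmaNegRadQuotient_eq hγ.ne', mul_assoc _ (riemannZeta (s + 2 * γ))]
  convert (((hζ 0 le_rfl).ofReal_mul (hζ γ hγ.le)).ofReal_mul
    ((hζ (2 * γ) (by positivity)).ofReal_mul (hζ (3 * γ) (by positivity)))) using 1 <;>
    simp [rpowNeg_zero]

theorem stmt14 (β γ : ℝ) (hβ : 1 < β) (hγ : 0 < γ) :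
    HasSum
      (fun k : ℕ+ =>
        ((sigmaNeg γ k * sigmaNeg γ (k * rad k) * sigmaNeg γ (k * rad k ^ 2) /
            (sigmaNeg γ (rad k) * sigmaNeg γ (rad k ^ 2)) : ℝ) : ℂ) *
          (k : ℂ) ^ (-(β : ℂ)))
      (riemannZeta β * riemannZeta (β + γ) * riemannZeta (β + 2 * γ) *
        riemannZeta (β + 3 * γ)) := by
  convert (LSeriesHasSum_sigmaNegRadQuotient (s := β) (by simpa using hβ) hγ).hasSum_pnat using 3
    with k
  rw [sigmaNegRadQuotient_apply γ k.ne_zero]
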